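/- Let (J₁,•₁,B) be a pseudo-euclidean mock-Lie superalgebra and (J₂,•₂) a mock-Lie superalgebra over a field K of characteristic 0, and let φ : J₂ → End(J₁) be a representation of J₂ on J₁ such that each φ(a) (a homogeneous of degree |a|) is an anti-superderivation of (J₁,•₁) of degree |a| that is supersymmetric with respect to B. Let ϕ(x,y)(a) = (-1)^{|x|(|y|+|a|)} B(y, φ(a)(x)) and let L₂* be the coadjoint representation of J₂. Then the Z/2-graded vector space J = J₂ ⊕ J₁ ⊕ J₂*, with the product (a+x+f) •_d (b+y+g) = a •₂ b + x •₁ y + φ(a)(y) + (-1)^{|x||y|} φ(b)(x) + L₂*(a)(g) + (-1)^{|x||y|} L₂*(b)(f) + ϕ(x,y) for homogeneous elements a+x+f of degree |x| and b+y+g of degree |y|, is a mock-Lie superalgebra (the double extension of J₁ by J₂ by means of φ). -/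

import Mathlib

/-- A mock-Lie superalgebra over `K`: a `ℤ/2`-graded vector space `J = J₀ ⊕ J₁`
with an even supercommutative bilinear product satisfying the super-Jacobi identity. -/
structure MockLieSuper (K : Type*) [Field K] (J : Type*) [AddCommGroup J] [Module K J] where
  gr : ZMod 2 → Submodule K J
  compl : IsCompl (gr 0) (gr 1)
  mul : J →ₗ[K] J →ₗ[K] J
  mul_mem : ∀ i j : ZMod 2, ∀ x ∈ gr i, ∀ y ∈ gr j, mul x y ∈ gr (i + j)
  supercomm : ∀ i j : ZMod 2, ∀ x ∈ gr i, ∀ y ∈ gr j,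
    mul x y = ((-1 : K) ^ (i.val * j.val)) • mul y x
  superJacobi : ∀ i j k : ZMod 2, ∀ x ∈ gr i, ∀ y ∈ gr j, ∀ z ∈ gr k,
    ((-1 : K) ^ (i.val * k.val)) • mul x (mul y z) +
      ((-1 : K) ^ (i.val * j.val)) • mul y (mul z x) +
      ((-1 : K) ^ (j.val * k.val)) • mul z (mul x y) = 0

private lemma zmod2_cases : ∀ i : ZMod 2, i = 0 ∨ i = 1 := by decide
private lemma z00 : (0+0 : ZMod 2) = 0 := rfl
private lemma z01 : (0+1 : ZMod 2) = 1 := rfl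
private lemma z10 : (1+0 : ZMod 2) = 1 := rfl
private lemma z11 : (1+1 : ZMod 2) = 0 := rfl
private lemma zv0 : (0 : ZMod 2).val = 0 := rfl
private lemma zv1 : (1 : ZMod 2).val = 1 := rfl

private lemma ext_homog {K J V : Type*} [Field K] [AddCommGroup J] [Module K J]
    [AddCommGroup V] [Module K V] (M : MockLieSuper K J) {f g : J →ₗ[K] V}
    (h : ∀ m : ZMod 2, ∀ d ∈ M.gr m, f d = g d) : f = g := by
  ext x
  obtain ⟨u, v, hu, hv, rfl⟩ := Submodule.codisjoint_iff_exists_add_eq.mp M.compl.codisjoint x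
  simp [map_add, h 0 u hu, h 1 v hv]

private lemma smul_cancel {K V : Type*} [Field K] [AddCommGroup V] [Module K V] {n : ℕ} {v : V}
    (h : ((-1:K)^n) • v = 0) : v = 0 := by
  rcases smul_eq_zero.mp h with h' | h'
  · exact absurd h' (pow_ne_zero _ (by norm_num))
  · exact h'

private lemma mulmul {K J : Type*} [Field K] [AddCommGroup J] [Module K J]
    (M : MockLieSuper K J) (i j : ZMod 2) (a : J) (ha : a ∈ M.gr i) (b : J) (hb : b ∈ M.gr j)
    (w : J) : M.mul (M.mul a b) w =
      -M.mul a (M.mul b w) - ((-1:K)^(i.val*j.val)) • M.mul b (M.mul a w) := by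
  suffices hs : (M.mul (M.mul a b)) =
      (-(M.mul a ∘ₗ M.mul b) - ((-1:K)^(i.val*j.val)) • (M.mul b ∘ₗ M.mul a)) by
    have h2 := LinearMap.congr_fun hs w
    simpa using h2
  apply ext_homog M
  intro m d hd
  have jac := M.superJacobi i j m a ha b hb d hd
  have c1 : M.mul d a = ((-1:K)^(m.val*i.val)) • M.mul a d := M.supercomm m i d hd a ha
  have c2 : M.mul d (M.mul a b) = ((-1:K)^(m.val*(i+j).val)) • M.mul (M.mul a b) d :=
    M.supercomm m (i+j) d hd _ (M.mul_mem i j a ha b hb)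
  rw [c1, map_smul, c2] at jac
  have key : ((-1:K)^(i.val*m.val)) • (M.mul (M.mul a b) d + M.mul a (M.mul b d)
      + ((-1:K)^(i.val*j.val)) • M.mul b (M.mul a d)) = 0 := by
    rcases zmod2_cases i with rfl | rfl <;> rcases zmod2_cases j with rfl | rfl <;>
      rcases zmod2_cases m with rfl | rfl <;>
      simp only [z00, z01, z10, z11, zv0, zv1] at jac ⊢ <;>
      linear_combination (norm := module) jac
  have key2 := smul_cancel key
  simp only [LinearMap.sub_apply, LinearMap.neg_apply, LinearMap.smul_apply, LinearMap.comp_apply]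
  linear_combination (norm := module) key2
private lemma isCompl_prod3 {K A B C : Type*} [Field K] [AddCommGroup A] [Module K A]
    [AddCommGroup B] [Module K B] [AddCommGroup C] [Module K C]
    {a0 a1 : Submodule K A} {b0 b1 : Submodule K B} {c0 c1 : Submodule K C}
    (hA : IsCompl a0 a1) (hB : IsCompl b0 b1) (hC : IsCompl c0 c1) :
    IsCompl (a0.prod (b0.prod c0)) (a1.prod (b1.prod c1)) := by
  constructor
  · rw [disjoint_iff, Submodule.eq_bot_iff]
    rintro ⟨p, q, r⟩ hx
    obtain ⟨⟨hp0, hq0, hr0⟩, ⟨hp1, hq1, hr1⟩⟩ := Submodule.mem_inf.mp hx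
    have hp := Submodule.disjoint_def.mp hA.disjoint p hp0 hp1
    have hq := Submodule.disjoint_def.mp hB.disjoint q hq0 hq1
    have hr := Submodule.disjoint_def.mp hC.disjoint r hr0 hr1
    simp [hp, hq, hr, Prod.ext_iff]
  · rw [codisjoint_iff_le_sup]
    rintro ⟨p, q, r⟩ -
    obtain ⟨p0, p1, hp0, hp1, hp⟩ := Submodule.codisjoint_iff_exists_add_eq.mp hA.codisjoint p
    obtain ⟨q0, q1, hq0, hq1, hq⟩ := Submodule.codisjoint_iff_exists_add_eq.mp hB.codisjoint q
    obtain ⟨r0, r1, hr0, hr1, hr⟩ := Submodule.codisjoint_iff_exists_add_eq.mp hC.codisjoint r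
    exact Submodule.mem_sup.mpr ⟨(p0, q0, r0), ⟨hp0, hq0, hr0⟩, (p1, q1, r1), ⟨hp1, hq1, hr1⟩,
      by simp [Prod.ext_iff, hp, hq, hr]⟩

private lemma zq1 : ∀ i p : ZMod 2, i + (i+p+1) = p+1 := by decide
private lemma zq2 : ∀ i j : ZMod 2, (i+j+1)+i = j+1 := by decide
private lemma zq3 : ∀ j : ZMod 2, j ≠ j+1 := by decide
private lemma zq4 : ∀ i j : ZMod 2, j+i+1 = i+j+1 := by decide
/-- A pseudo-euclidean structure on a mock-Lie superalgebra: an even, supersymmetric,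
non-degenerate and invariant bilinear form. -/
structure IsPseudoEuclidean {K : Type*} [Field K] {J : Type*} [AddCommGroup J] [Module K J]
    (M : MockLieSuper K J) (B : J →ₗ[K] J →ₗ[K] K) : Prop where
  even : ∀ i j : ZMod 2, i ≠ j → ∀ x ∈ M.gr i, ∀ y ∈ M.gr j, B x y = 0
  supersym : ∀ i j : ZMod 2, ∀ x ∈ M.gr i, ∀ y ∈ M.gr j,
    B x y = ((-1 : K) ^ (i.val * j.val)) * B y x
  nondeg : ∀ x : J, (∀ y : J, B x y = 0) → x = 0
  invariant : ∀ x y z : J, B (M.mul x y) z = B x (M.mul y z)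

/-- A representation of a mock-Lie superalgebra `M` on a `ℤ/2`-graded vector space `V`:
an even linear map `π : J → End V` with `π(x•y) = -π(x)π(y) - (-1)^{|x||y|} π(y)π(x)`. -/
structure IsRep {K : Type*} [Field K] {J V : Type*} [AddCommGroup J] [Module K J]
    [AddCommGroup V] [Module K V] (M : MockLieSuper K J)
    (Vgr : ZMod 2 → Submodule K V) (π : J →ₗ[K] Module.End K V) : Prop where
  even : ∀ i j : ZMod 2, ∀ x ∈ M.gr i, ∀ v ∈ Vgr j, π x v ∈ Vgr (i + j)
  rep : ∀ i j : ZMod 2, ∀ x ∈ M.gr i, ∀ y ∈ M.gr j,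
    π (M.mul x y) = -(π x * π y) - ((-1 : K) ^ (i.val * j.val)) • (π y * π x)

set_option maxHeartbeats 2000000 in
/-- The double extension `J₂ ⊕ J₁ ⊕ J₂*` of a pseudo-euclidean mock-Lie superalgebra
`J₁` by a mock-Lie superalgebra `J₂`, by means of a representation `φ` of `J₂` by
supersymmetric anti-superderivations of `J₁`, is a mock-Lie superalgebra. -/
theorem double_extension {K : Type*} [Field K] [CharZero K]
    {J₁ J₂ : Type*} [AddCommGroup J₁] [Module K J₁] [FiniteDimensional K J₁]
    [AddCommGroup J₂] [Module K J₂] [FiniteDimensional K J₂]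
    (M₁ : MockLieSuper K J₁) (M₂ : MockLieSuper K J₂)
    (B : J₁ →ₗ[K] J₁ →ₗ[K] K) (hPE : IsPseudoEuclidean M₁ B)
    (φ : J₂ →ₗ[K] Module.End K J₁)
    (hrep : IsRep M₂ M₁.gr φ)
    (hander : ∀ j i : ZMod 2, ∀ a ∈ M₂.gr j, ∀ x ∈ M₁.gr i, ∀ y : J₁,
      φ a (M₁.mul x y) =
        -M₁.mul (φ a x) y - ((-1 : K) ^ (j.val * i.val)) • M₁.mul x (φ a y))
    (hsym : ∀ j i : ZMod 2, ∀ a ∈ M₂.gr j, ∀ x ∈ M₁.gr i, ∀ y : J₁,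
      B (φ a x) y = ((-1 : K) ^ (j.val * i.val)) * B x (φ a y))
    (vphi : J₁ →ₗ[K] J₁ →ₗ[K] Module.Dual K J₂)
    (hvphi : ∀ i j k : ZMod 2, ∀ x ∈ M₁.gr i, ∀ y ∈ M₁.gr j, ∀ a ∈ M₂.gr k,
      vphi x y a = ((-1 : K) ^ (i.val * (j.val + k.val))) * B y (φ a x))
    (Lstar₂ : J₂ →ₗ[K] Module.End K (Module.Dual K J₂))
    (hLstar₂ : ∀ i p : ZMod 2, ∀ a ∈ M₂.gr i, ∀ f ∈ (M₂.gr (p + 1)).dualAnnihilator,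
      Lstar₂ a f = ((-1 : K) ^ (p.val * i.val)) • (f ∘ₗ M₂.mul a))
    (muld : (J₂ × J₁ × Module.Dual K J₂) →ₗ[K] (J₂ × J₁ × Module.Dual K J₂) →ₗ[K]
      (J₂ × J₁ × Module.Dual K J₂))
    (hmuld : ∀ i j : ZMod 2,
      ∀ p ∈ (M₂.gr i).prod ((M₁.gr i).prod ((M₂.gr (i + 1)).dualAnnihilator)),
      ∀ q ∈ (M₂.gr j).prod ((M₁.gr j).prod ((M₂.gr (j + 1)).dualAnnihilator)),
      muld p q = (M₂.mul p.1 q.1,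
        M₁.mul p.2.1 q.2.1 + φ p.1 q.2.1 + ((-1 : K) ^ (i.val * j.val)) • φ q.1 p.2.1,
        Lstar₂ p.1 q.2.2 + ((-1 : K) ^ (i.val * j.val)) • Lstar₂ q.1 p.2.2 +
          vphi p.2.1 q.2.1)) :
    ∃ N : MockLieSuper K (J₂ × J₁ × Module.Dual K J₂),
      (∀ i : ZMod 2,
        N.gr i = (M₂.gr i).prod ((M₁.gr i).prod ((M₂.gr (i + 1)).dualAnnihilator))) ∧
      N.mul = muld := by
  classical
  have compmem : ∀ (i' p' : ZMod 2), ∀ b' ∈ M₂.gr i',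
      ∀ f' ∈ (M₂.gr (p'+1)).dualAnnihilator,
      (f' ∘ₗ M₂.mul b') ∈ (M₂.gr (i'+p'+1)).dualAnnihilator := by
    intro i' p' b' hb' f' hf'
    rw [Submodule.mem_dualAnnihilator]
    intro w hw
    have hm : M₂.mul b' w ∈ M₂.gr (i' + (i'+p'+1)) := M₂.mul_mem _ _ b' hb' w hw
    rw [zq1 i' p'] at hm
    exact (Submodule.mem_dualAnnihilator _).mp hf' _ hm
  have vmem : ∀ i' j' : ZMod 2, ∀ x' ∈ M₁.gr i', ∀ y' ∈ M₁.gr j',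
      vphi x' y' ∈ (M₂.gr (i'+j'+1)).dualAnnihilator := by
    intro i' j' x' hx' y' hy'
    rw [Submodule.mem_dualAnnihilator]
    intro w hw
    rw [hvphi i' j' (i'+j'+1) x' hx' y' hy' w hw]
    have hm : φ w x' ∈ M₁.gr ((i'+j'+1)+i') := hrep.even _ _ w hw x' hx'
    rw [zq2 i' j'] at hm
    rw [hPE.even j' (j'+1) (zq3 j') y' hy' _ hm, mul_zero]
  have hmem : ∀ i j : ZMod 2,
      ∀ p ∈ (M₂.gr i).prod ((M₁.gr i).prod ((M₂.gr (i + 1)).dualAnnihilator)),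
      ∀ q ∈ (M₂.gr j).prod ((M₁.gr j).prod ((M₂.gr (j + 1)).dualAnnihilator)),
      muld p q ∈ (M₂.gr (i+j)).prod ((M₁.gr (i+j)).prod
        ((M₂.gr (i + j + 1)).dualAnnihilator)) := by
    intro i j p hp q hq
    obtain ⟨ha, hx, hf⟩ := hp
    obtain ⟨hb, hy, hg⟩ := hq
    rw [hmuld i j p ⟨ha, hx, hf⟩ q ⟨hb, hy, hg⟩]
    refine ⟨M₂.mul_mem i j _ ha _ hb, ?_, ?_⟩
    · refine Submodule.add_mem _ (Submodule.add_mem _ (M₁.mul_mem i j _ hx _ hy)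
        (hrep.even i j _ ha _ hy)) (Submodule.smul_mem _ _ ?_)
      have := hrep.even j i _ hb _ hx
      rwa [add_comm j i] at this
    · refine Submodule.add_mem _ (Submodule.add_mem _ ?_ (Submodule.smul_mem _ _ ?_))
        (vmem i j _ hx _ hy)
      · rw [hLstar₂ i j p.1 ha q.2.2 hg]
        exact Submodule.smul_mem _ _ (compmem i j _ ha _ hg)
      · rw [hLstar₂ j i q.1 hb p.2.2 hf]
        refine Submodule.smul_mem _ _ ?_
        have := compmem j i _ hb _ hf
        rwa [zq4 i j] at this
  refine ⟨{ gr := fun i => (M₂.gr i).prod ((M₁.gr i).prod ((M₂.gr (i + 1)).dualAnnihilator)),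
            compl := ?_, mul := muld, mul_mem := ?_, supercomm := ?_, superJacobi := ?_ },
          fun i => rfl, rfl⟩
  case refine_1 =>
    have hdual : IsCompl (M₂.gr (0+1)).dualAnnihilator (M₂.gr (1+1)).dualAnnihilator := by
      rw [z01, z11]
      exact (Subspace.isCompl_dualAnnihilator M₂.compl).symm
    exact isCompl_prod3 M₂.compl M₁.compl hdual
  case refine_2 => exact hmem
  case refine_3 =>
    intro i j p hp q hq
    obtain ⟨a, x, f⟩ := p
    obtain ⟨b, y, g⟩ := q
    obtain ⟨ha, hx, hf⟩ := hp
    obtain ⟨hb, hy, hg⟩ := hq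
    rw [hmuld i j (a,x,f) ⟨ha,hx,hf⟩ (b,y,g) ⟨hb,hy,hg⟩,
        hmuld j i (b,y,g) ⟨hb,hy,hg⟩ (a,x,f) ⟨ha,hx,hf⟩]
    have hvs : vphi x y = ((-1:K)^(i.val*j.val)) • vphi y x := by
      apply ext_homog M₂
      intro m d hd
      rw [LinearMap.smul_apply, smul_eq_mul,
          hvphi i j m _ hx _ hy d hd, hvphi j i m _ hy _ hx d hd,
          hPE.supersym j (m+i) _ hy _ (hrep.even m i d hd _ hx),
          hsym m i d hd _ hx y]
      rcases zmod2_cases i with rfl|rfl <;> rcases zmod2_cases j with rfl|rfl <;>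
        rcases zmod2_cases m with rfl|rfl <;>
        simp only [z00,z01,z10,z11,zv0,zv1] <;> ring
    simp only
    rw [M₂.supercomm i j _ ha _ hb, M₁.supercomm i j _ hx _ hy, hvs]
    rcases zmod2_cases i with rfl|rfl <;> rcases zmod2_cases j with rfl|rfl <;>
      simp only [Prod.smul_mk, Prod.mk.injEq, z00,z01,z10,z11,zv0,zv1] <;>
      refine ⟨by first | trivial | module, by first | trivial | module, by first | trivial | module⟩
  case refine_4 =>
    intro i j k p hp q hq r hr
    obtain ⟨a, x, f⟩ := p
    obtain ⟨b, y, g⟩ := q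
    obtain ⟨c, z, h'⟩ := r
    obtain ⟨ha, hx, hf⟩ := hp
    obtain ⟨hb, hy, hg⟩ := hq
    obtain ⟨hc, hz, hh⟩ := hr
    have e1 := hmuld j k (b,y,g) ⟨hb,hy,hg⟩ (c,z,h') ⟨hc,hz,hh⟩
    have e2 := hmuld k i (c,z,h') ⟨hc,hz,hh⟩ (a,x,f) ⟨ha,hx,hf⟩
    have e3 := hmuld i j (a,x,f) ⟨ha,hx,hf⟩ (b,y,g) ⟨hb,hy,hg⟩
    have E1 := hmuld i (j+k) (a,x,f) ⟨ha,hx,hf⟩ _ (hmem j k _ ⟨hb,hy,hg⟩ _ ⟨hc,hz,hh⟩)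
    have E2 := hmuld j (k+i) (b,y,g) ⟨hb,hy,hg⟩ _ (hmem k i _ ⟨hc,hz,hh⟩ _ ⟨ha,hx,hf⟩)
    have E3 := hmuld k (i+j) (c,z,h') ⟨hc,hz,hh⟩ _ (hmem i j _ ⟨ha,hx,hf⟩ _ ⟨hb,hy,hg⟩)
    rw [e1] at E1
    rw [e2] at E2
    rw [e3] at E3
    simp only [] at E1 E2 E3
    rw [e1, e2, e3, E1, E2, E3]
    simp only [Prod.smul_mk, Prod.mk_add_mk, Prod.mk_eq_zero]
    refine ⟨?_, ?_, ?_⟩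
    · exact M₂.superJacobi i j k a ha b hb c hc
    · have jac1 := M₁.superJacobi i j k x hx y hy z hz
      have and1 := hander i j a ha y hy z
      have and2 := hander j k b hb z hz x
      have and3 := hander k i c hc x hx y
      have rep1 : φ (M₂.mul b c) x = -(φ b (φ c x)) - ((-1:K)^(j.val*k.val)) • φ c (φ b x) := by
        have h0 := hrep.rep j k b hb c hc
        calc φ (M₂.mul b c) x = (-(φ b * φ c) - ((-1:K)^(j.val*k.val)) • (φ c * φ b)) x := by
              rw [h0]
          _ = _ := by simp [Module.End.mul_apply]
      have rep2 : φ (M₂.mul c a) y = -(φ c (φ a y)) - ((-1:K)^(k.val*i.val)) • φ a (φ c y) := by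
        have h0 := hrep.rep k i c hc a ha
        calc φ (M₂.mul c a) y = (-(φ c * φ a) - ((-1:K)^(k.val*i.val)) • (φ a * φ c)) y := by
              rw [h0]
          _ = _ := by simp [Module.End.mul_apply]
      have rep3 : φ (M₂.mul a b) z = -(φ a (φ b z)) - ((-1:K)^(i.val*j.val)) • φ b (φ a z) := by
        have h0 := hrep.rep i j a ha b hb
        calc φ (M₂.mul a b) z = (-(φ a * φ b) - ((-1:K)^(i.val*j.val)) • (φ b * φ a)) z := by
              rw [h0]
          _ = _ := by simp [Module.End.mul_apply]
      have com1 := M₁.supercomm (i+j) k _ (hrep.even i j a ha y hy) z hz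
      have com2 := M₁.supercomm (j+k) i _ (hrep.even j k b hb z hz) x hx
      have com3 := M₁.supercomm (k+i) j _ (hrep.even k i c hc x hx) y hy
      simp only [map_add, map_smul]
      rw [and1, and2, and3, rep1, rep2, rep3, com1, com2, com3]
      rcases zmod2_cases i with rfl|rfl <;> rcases zmod2_cases j with rfl|rfl <;>
        rcases zmod2_cases k with rfl|rfl <;>
        simp only [z00,z01,z10,z11,zv0,zv1] at jac1 ⊢ <;>
        linear_combination (norm := module) jac1
    · refine ext_homog M₂ ?_
      intro m d hd
      have mφdx := hrep.even m i d hd x hx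
      have mφdy := hrep.even m j d hd y hy
      have mφdz := hrep.even m k d hd z hz
      have mφay := hrep.even i j a ha y hy
      have mφaz := hrep.even i k a ha z hz
      have mφbz := hrep.even j k b hb z hz
      have mφbx := hrep.even j i b hb x hx
      have mφcx := hrep.even k i c hc x hx
      have mφcy := hrep.even k j c hc y hy
      have RA1 : φ (M₂.mul a d) y = -(φ a (φ d y)) - ((-1:K)^(i.val*m.val)) • φ d (φ a y) := by
        have h0 := hrep.rep i m a ha d hd
        calc φ (M₂.mul a d) y = (-(φ a * φ d) - ((-1:K)^(i.val*m.val)) • (φ d * φ a)) y := by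
              rw [h0]
          _ = _ := by simp [Module.End.mul_apply]
      have RA2 : φ (M₂.mul b d) z = -(φ b (φ d z)) - ((-1:K)^(j.val*m.val)) • φ d (φ b z) := by
        have h0 := hrep.rep j m b hb d hd
        calc φ (M₂.mul b d) z = (-(φ b * φ d) - ((-1:K)^(j.val*m.val)) • (φ d * φ b)) z := by
              rw [h0]
          _ = _ := by simp [Module.End.mul_apply]
      have RA3 : φ (M₂.mul c d) x = -(φ c (φ d x)) - ((-1:K)^(k.val*m.val)) • φ d (φ c x) := by
        have h0 := hrep.rep k m c hc d hd
        calc φ (M₂.mul c d) x = (-(φ c * φ d) - ((-1:K)^(k.val*m.val)) • (φ d * φ c)) x := by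
              rw [h0]
          _ = _ := by simp [Module.End.mul_apply]
      simp only [LinearMap.add_apply, LinearMap.smul_apply, LinearMap.zero_apply, map_add,
        map_smul, smul_eq_mul]
      rw [hLstar₂ j k b hb h' hh, hLstar₂ k j c hc g hg, hLstar₂ k i c hc f hf,
          hLstar₂ i k a ha h' hh, hLstar₂ i j a ha g hg, hLstar₂ j i b hb f hf]
      simp only [map_add, map_smul, LinearMap.add_apply, LinearMap.smul_apply, smul_eq_mul]
      rw [hLstar₂ i (j+k) a ha (h' ∘ₗ M₂.mul b) (compmem j k b hb h' hh),
          hLstar₂ i (k+j) a ha (g ∘ₗ M₂.mul c) (compmem k j c hc g hg),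
          hLstar₂ j (k+i) b hb (f ∘ₗ M₂.mul c) (compmem k i c hc f hf),
          hLstar₂ j (i+k) b hb (h' ∘ₗ M₂.mul a) (compmem i k a ha h' hh),
          hLstar₂ k (i+j) c hc (g ∘ₗ M₂.mul a) (compmem i j a ha g hg),
          hLstar₂ k (j+i) c hc (f ∘ₗ M₂.mul b) (compmem j i b hb f hf),
          hLstar₂ i (j+k) a ha (vphi y z) (vmem j k y hy z hz),
          hLstar₂ j (k+i) b hb (vphi z x) (vmem k i z hz x hx),
          hLstar₂ k (i+j) c hc (vphi x y) (vmem i j x hx y hy),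
          hLstar₂ (j+k) i (M₂.mul b c) (M₂.mul_mem j k b hb c hc) f hf,
          hLstar₂ (k+i) j (M₂.mul c a) (M₂.mul_mem k i c hc a ha) g hg,
          hLstar₂ (i+j) k (M₂.mul a b) (M₂.mul_mem i j a ha b hb) h' hh]
      simp only [LinearMap.smul_apply, LinearMap.comp_apply, smul_eq_mul]
      rw [mulmul M₂ j k b hb c hc d, mulmul M₂ k i c hc a ha d, mulmul M₂ i j a ha b hb d]
      simp only [map_sub, map_neg, map_smul, smul_eq_mul]
      rw [hvphi j k (i+m) y hy z hz (M₂.mul a d) (M₂.mul_mem i m a ha d hd),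
          hvphi k i (j+m) z hz x hx (M₂.mul b d) (M₂.mul_mem j m b hb d hd),
          hvphi i j (k+m) x hx y hy (M₂.mul c d) (M₂.mul_mem k m c hc d hd),
          hvphi i (j+k) m x hx (M₁.mul y z) (M₁.mul_mem j k y hy z hz) d hd,
          hvphi j (k+i) m y hy (M₁.mul z x) (M₁.mul_mem k i z hz x hx) d hd,
          hvphi k (i+j) m z hz (M₁.mul x y) (M₁.mul_mem i j x hx y hy) d hd,
          hvphi i (j+k) m x hx (φ b z) mφbz d hd,
          hvphi i (k+j) m x hx (φ c y) mφcy d hd,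
          hvphi j (k+i) m y hy (φ c x) mφcx d hd,
          hvphi j (i+k) m y hy (φ a z) mφaz d hd,
          hvphi k (i+j) m z hz (φ a y) mφay d hd,
          hvphi k (j+i) m z hz (φ b x) mφbx d hd]
      rw [RA1, RA2, RA3]
      simp only [map_sub, map_neg, map_smul, smul_eq_mul]
      rw [hPE.invariant z x (φ d y), hPE.invariant x y (φ d z)]
      rw [hPE.supersym k (i+(m+j)) z hz _ (hrep.even i (m+j) a ha _ mφdy),
          hsym i (m+j) a ha _ mφdy z]
      rw [hPE.supersym k (m+(i+j)) z hz _ (hrep.even m (i+j) d hd _ mφay),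
          hsym m (i+j) d hd _ mφay z]
      rw [hPE.supersym i (j+(m+k)) x hx _ (hrep.even j (m+k) b hb _ mφdz),
          hsym j (m+k) b hb _ mφdz x]
      rw [hPE.supersym i (m+(j+k)) x hx _ (hrep.even m (j+k) d hd _ mφbz),
          hsym m (j+k) d hd _ mφbz x]
      rw [hPE.supersym j (k+(m+i)) y hy _ (hrep.even k (m+i) c hc _ mφdx),
          hsym k (m+i) c hc _ mφdx y]
      rw [hPE.supersym j (m+(k+i)) y hy _ (hrep.even m (k+i) d hd _ mφcx),
          hsym m (k+i) d hd _ mφcx y]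
      rw [hPE.supersym (i+k) (m+j) _ mφaz _ mφdy]
      rw [hPE.supersym (j+i) (m+k) _ mφbx _ mφdz]
      rw [hPE.supersym (k+j) (m+i) _ mφcy _ mφdx]
      rw [hPE.supersym (j+k) (m+i) _ (M₁.mul_mem j k y hy z hz) _ mφdx,
          hsym m i d hd x hx (M₁.mul y z),
          hander m j d hd y hy z]
      rw [hPE.supersym k (i+(m+j)) z hz _ (M₁.mul_mem i (m+j) x hx _ mφdy),
          hPE.invariant x (φ d y) z]
      simp only [map_sub, map_neg, map_smul, smul_eq_mul]
      rcases zmod2_cases i with rfl|rfl <;> rcases zmod2_cases j with rfl|rfl <;>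
        rcases zmod2_cases k with rfl|rfl <;> rcases zmod2_cases m with rfl|rfl <;>
        simp only [z00,z01,z10,z11,zv0,zv1] <;> ring
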